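/- The function t ↦ t·((1/2)·erfc(t) − 𝟙_{t ≤ 0}) is integrable on ℝ and ∫_ℝ t·((1/2)·erfc(t) − 𝟙_{t ≤ 0}) dt = 1/4, where 𝟙_{t ≤ 0} denotes the indicator function of the set {t ∈ ℝ : t ≤ 0}. -/

import Mathlib

/-!
Since `erfc (-t) = 2 - erfc t`, the integrand equals `|t| · ½ erfc |t|`, so it is even and
everything reduces to `∫₀^∞ t erfc t dt = 1/4`. The function `t erfc t` is nonnegative on
`(0, ∞)` and has an explicit primitive, which tends to `0` at `+∞` by the Gaussian tail bound
`erfc t ≤ 2 e^{-t²}` and equals `-1/4` at `0`.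
-/

open MeasureTheory Real

/-- The complementary error function `erfc t = (2/√π) ∫_t^∞ e^{-u²} du`. -/
noncomputable def erfc (t : ℝ) : ℝ := (2 / Real.sqrt Real.pi) * ∫ u in Set.Ioi t, Real.exp (-u ^ 2)

open Set Filter Topology

theorem integrable_comp_abs_of_integrableOn_Ioi {E : Type*} [NormedAddCommGroup E] {f : ℝ → E}
    (hf : IntegrableOn f (Ioi 0)) : Integrable fun x => f |x| := by
  have hIoi : IntegrableOn (fun x => f |x|) (Ioi 0) :=
    hf.congr_fun (fun x hx => by rw [abs_of_pos hx]) measurableSet_Ioi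
  have hIic : IntegrableOn (fun x => f |x|) (Iic 0) := by
    let neg : MeasurableEmbedding fun x : ℝ => -x := (Homeomorph.neg ℝ).measurableEmbedding
    rw [← Measure.map_neg_eq_self (volume : Measure ℝ), neg.integrableOn_map_iff]
    simp_rw [Function.comp_def, abs_neg, neg_preimage, neg_Iic, neg_zero]
    exact Iff.mpr integrableOn_Ici_iff_integrableOn_Ioi hIoi
  have := hIic.union hIoi
  rwa [Iic_union_Ioi, integrableOn_univ] at this

theorem integrable_exp_neg_sq : Integrable fun u : ℝ => exp (-u ^ 2) := by
  simpa using integrable_exp_neg_mul_sq one_pos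

theorem erfc_eq_one_sub (t : ℝ) :
    erfc t = 1 - 2 / √π * ∫ u in (0 : ℝ)..t, exp (-u ^ 2) := by
  have hsplit := intervalIntegral.integral_interval_add_Ioi (a := 0) (b := t)
    integrable_exp_neg_sq.integrableOn integrable_exp_neg_sq.integrableOn
  have hhalf : ∫ u in Ioi (0 : ℝ), exp (-u ^ 2) = √π / 2 := by
    simpa using integral_gaussian_Ioi 1
  have : √π ≠ 0 := (sqrt_pos.2 pi_pos).ne'
  rw [erfc, ← sub_eq_of_eq_add' (hsplit.trans hhalf).symm]
  field_simp

theorem erfc_zero : erfc 0 = 1 := by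
  simp [erfc_eq_one_sub]

theorem erfc_add_erfc_neg (t : ℝ) : erfc t + erfc (-t) = 2 := by
  have hodd : ∫ u in (0 : ℝ)..-t, exp (-u ^ 2) = -∫ u in (0 : ℝ)..t, exp (-u ^ 2) := by
    have h := intervalIntegral.integral_comp_neg (a := 0) (b := t) fun u => exp (-u ^ 2)
    simp only [neg_sq, neg_zero] at h
    rw [h, intervalIntegral.integral_symm (-t) 0]
  rw [erfc_eq_one_sub, erfc_eq_one_sub, hodd]
  ring

theorem hasDerivAt_erfc (t : ℝ) : HasDerivAt erfc (-(2 / √π) * exp (-t ^ 2)) t := by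
  have hcont : Continuous fun u : ℝ => exp (-u ^ 2) := by fun_prop
  have hint : HasDerivAt (fun x => ∫ u in (0 : ℝ)..x, exp (-u ^ 2)) (exp (-t ^ 2)) t :=
    intervalIntegral.integral_hasDerivAt_right integrable_exp_neg_sq.intervalIntegrable
      (hcont.stronglyMeasurableAtFilter _ _) hcont.continuousAt
  rw [funext erfc_eq_one_sub, neg_mul]
  exact (hint.const_mul _).const_sub 1

theorem erfc_nonneg (t : ℝ) : 0 ≤ erfc t :=
  mul_nonneg (by positivity) (setIntegral_nonneg measurableSet_Ioi fun _ _ => (exp_pos _).le)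

theorem erfc_le_two_mul_exp_neg_sq {t : ℝ} (ht : 0 ≤ t) : erfc t ≤ 2 * exp (-t ^ 2) := by
  have hshift : Integrable fun u => exp (-t ^ 2) * exp (-(u - t) ^ 2) :=
    (integrable_exp_neg_sq.comp_sub_right t).const_mul _
  have htail : ∫ u in Ioi t, exp (-u ^ 2) ≤ exp (-t ^ 2) * √π :=
    calc ∫ u in Ioi t, exp (-u ^ 2)
        ≤ ∫ u in Ioi t, exp (-t ^ 2) * exp (-(u - t) ^ 2) := by
          refine setIntegral_mono_on integrable_exp_neg_sq.integrableOn hshift.integrableOn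
            measurableSet_Ioi fun u hu => ?_
          -- `u² ≥ t² + (u - t)²` for `u ≥ t ≥ 0`
          rw [← exp_add, exp_le_exp]
          nlinarith [mem_Ioi.1 hu]
      _ ≤ ∫ u, exp (-t ^ 2) * exp (-(u - t) ^ 2) :=
          setIntegral_le_integral hshift (.of_forall fun _ => by positivity)
      _ = exp (-t ^ 2) * √π := by
          rw [integral_const_mul, integral_sub_right_eq_self (fun u => exp (-u ^ 2)) t]
          simpa using integral_gaussian 1
  have : 0 < √π := sqrt_pos.2 pi_pos
  calc erfc t ≤ 2 / √π * (exp (-t ^ 2) * √π) := by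
        unfold erfc; gcongr
    _ = 2 * exp (-t ^ 2) := by field_simp

theorem tendsto_pow_mul_exp_neg_sq_atTop (n : ℕ) :
    Tendsto (fun x : ℝ => x ^ n * exp (-x ^ 2)) atTop (𝓝 0) := by
  have := (rpow_mul_exp_neg_mul_sq_isLittleO_exp_neg one_pos n).tendsto_zero_of_tendsto
    (tendsto_exp_atBot.comp (tendsto_id.const_mul_atTop_of_neg (by norm_num)))
  simpa using this

theorem tendsto_pow_mul_erfc_atTop (n : ℕ) :
    Tendsto (fun x : ℝ => x ^ n * erfc x) atTop (𝓝 0) := by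
  refine squeeze_zero' ?_ ?_ (by simpa using (tendsto_pow_mul_exp_neg_sq_atTop n).const_mul 2)
  · filter_upwards [eventually_ge_atTop 0] with x hx
    exact mul_nonneg (pow_nonneg hx n) (erfc_nonneg x)
  · filter_upwards [eventually_ge_atTop 0] with x hx
    calc x ^ n * erfc x ≤ x ^ n * (2 * exp (-x ^ 2)) := by
          gcongr; exact erfc_le_two_mul_exp_neg_sq hx
      _ = 2 * (x ^ n * exp (-x ^ 2)) := by ring

/-- Integrating by parts twice, `∫ x erfc x = (x²/2) erfc x + (1/√π) ∫ x² e^{-x²}`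
and `∫ x² e^{-x²} = -x e^{-x²}/2 - (√π/4) erfc x`. -/
noncomputable def erfcFirstMomentPrimitive (x : ℝ) : ℝ :=
  (x ^ 2 / 2 - 1 / 4) * erfc x - x * exp (-x ^ 2) / (2 * √π)

theorem hasDerivAt_erfcFirstMomentPrimitive (x : ℝ) :
    HasDerivAt erfcFirstMomentPrimitive (x * erfc x) x := by
  have hquad : HasDerivAt (fun x : ℝ => x ^ 2 / 2 - 1 / 4) x x := by
    simpa using ((hasDerivAt_pow 2 x).div_const 2).sub_const (1 / 4)
  have hgauss : HasDerivAt (fun x : ℝ => exp (-x ^ 2)) (exp (-x ^ 2) * -(2 * x)) x := by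
    simpa using (hasDerivAt_pow 2 x).neg.exp
  have hsum := (hquad.mul (hasDerivAt_erfc x)).sub
    (((hasDerivAt_id x).mul hgauss).div_const (2 * √π))
  have : √π ≠ 0 := (sqrt_pos.2 pi_pos).ne'
  refine HasDerivAt.congr_deriv (f := erfcFirstMomentPrimitive) hsum ?_
  simp only [id]
  field_simp
  ring

theorem tendsto_erfcFirstMomentPrimitive_atTop :
    Tendsto erfcFirstMomentPrimitive atTop (𝓝 0) := by
  have := (((tendsto_pow_mul_erfc_atTop 2).div_const 2).sub
    ((tendsto_pow_mul_erfc_atTop 0).div_const 4)).sub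
    ((tendsto_pow_mul_exp_neg_sq_atTop 1).div_const (2 * √π))
  simp only [zero_div, sub_zero] at this
  convert this using 2 with x
  simp only [erfcFirstMomentPrimitive, pow_zero, pow_one]
  ring

theorem integrableOn_Ioi_mul_erfc : IntegrableOn (fun x => x * erfc x) (Ioi 0) :=
  integrableOn_Ioi_deriv_of_nonneg' (fun x _ => hasDerivAt_erfcFirstMomentPrimitive x)
    (fun x hx => mul_nonneg (le_of_lt hx) (erfc_nonneg x)) tendsto_erfcFirstMomentPrimitive_atTop

theorem integral_Ioi_mul_erfc : ∫ x in Ioi (0 : ℝ), x * erfc x = 1 / 4 := by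
  rw [integral_Ioi_of_hasDerivAt_of_nonneg' (fun x _ => hasDerivAt_erfcFirstMomentPrimitive x)
    (fun x hx => mul_nonneg (le_of_lt hx) (erfc_nonneg x)) tendsto_erfcFirstMomentPrimitive_atTop]
  norm_num [erfcFirstMomentPrimitive, erfc_zero]

theorem mul_half_erfc_sub_indicator_Iic (t : ℝ) :
    t * ((1 / 2) * erfc t - Set.indicator (Set.Iic (0 : ℝ)) (fun _ => (1 : ℝ)) t)
      = |t| * ((1 / 2) * erfc |t|) := by
  rcases le_or_gt t 0 with ht | ht
  · rw [indicator_of_mem (mem_Iic.2 ht), abs_of_nonpos ht]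
    linear_combination (t / 2) * erfc_add_erfc_neg t
  · rw [indicator_of_notMem (notMem_Iic.2 ht), abs_of_pos ht]
    ring

/-- `t ↦ t·((1/2)·erfc t − 𝟙_{t ≤ 0})` is integrable on `ℝ` with total integral `1/4`. -/
theorem erfc_minus_indicator_first_moment :
    Integrable (fun t : ℝ =>
      t * ((1 / 2) * erfc t - Set.indicator (Set.Iic (0 : ℝ)) (fun _ => (1 : ℝ)) t)) ∧
    (∫ t : ℝ, t * ((1 / 2) * erfc t - Set.indicator (Set.Iic (0 : ℝ)) (fun _ => (1 : ℝ)) t))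
      = 1 / 4 := by
  simp_rw [mul_half_erfc_sub_indicator_Iic, mul_left_comm |_| (1 / 2 : ℝ)]
  refine ⟨integrable_comp_abs_of_integrableOn_Ioi (f := fun x => 1 / 2 * (x * erfc x))
    (integrableOn_Ioi_mul_erfc.const_mul _), ?_⟩
  rw [integral_comp_abs (f := fun x => 1 / 2 * (x * erfc x)), integral_const_mul,
    integral_Ioi_mul_erfc]
  norm_num
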